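/- arXiv:2309.14532 — 2 statements merged into one kernel-verified Lean document; each statement's English description precedes it below -/
import Mathlib

section
/- Let λ₁, λ₂ be Borel measures on a topological space X and μ an s-finite Borel measure on a topological space Y, where X and Y are second countable (so X × Y is second countable) and their σ-algebras contain the open sets. If λ₁ and λ₂ vanish on the same open subsets of X (i.e. for every open U ⊆ X, λ₁(U) = 0 if and only if λ₂(U) = 0), then the product measures λ₁ × μ and λ₂ × μ vanish on the same open subsets of X × Y: for every open W ⊆ X × Y, (λ₁ × μ)(W) = 0 if and only if (λ₂ × μ)(W) = 0. -/
open MeasureTheory TopologicalSpace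

theorem TopologicalSpace.IsTopologicalBasis.measure_eq_zero_of_basis {α : Type*}
    [TopologicalSpace α] [MeasurableSpace α] {B : Set (Set α)} (hB : IsTopologicalBasis B)
    (hBc : B.Countable) {ν₁ ν₂ : Measure α} (h : ∀ b ∈ B, ν₁ b = 0 → ν₂ b = 0)
    {W : Set α} (hW : IsOpen W) (h0 : ν₁ W = 0) : ν₂ W = 0 := by
  obtain ⟨S, hSB, rfl⟩ := hB.open_eq_sUnion hW
  rw [measure_sUnion_null_iff (hBc.mono hSB)] at h0 ⊢
  exact fun b hb => h b (hSB hb) (h0 b hb)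

theorem MeasureTheory.Measure.prod_eq_zero_of_isOpen {X Y : Type*}
    [TopologicalSpace X] [MeasurableSpace X] [SecondCountableTopology X]
    [TopologicalSpace Y] [MeasurableSpace Y] [SecondCountableTopology Y]
    {lam₁ lam₂ : Measure X} (μ : Measure Y) [SFinite μ]
    (h : ∀ U : Set X, IsOpen U → lam₁ U = 0 → lam₂ U = 0)
    {W : Set (X × Y)} (hW : IsOpen W) (h0 : lam₁.prod μ W = 0) : lam₂.prod μ W = 0 := by
  refine ((isBasis_countableBasis X).prod (isBasis_countableBasis Y)).measure_eq_zero_of_basis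
    ((countable_countableBasis X).image2 (countable_countableBasis Y) _) ?_ hW h0
  rintro _ ⟨u, hu, v, -, rfl⟩ huv
  rw [Measure.prod_prod] at huv ⊢
  rcases mul_eq_zero.1 huv with hu0 | hv0
  · rw [h u (isOpen_of_mem_countableBasis hu) hu0, zero_mul]
  · rw [hv0, mul_zero]

theorem prod_vanish_same_open_general {X Y : Type*}
    [TopologicalSpace X] [MeasurableSpace X]
    [SecondCountableTopology X]
    [TopologicalSpace Y] [MeasurableSpace Y]
    [SecondCountableTopology Y]
    (lam₁ lam₂ : Measure X) (μ : Measure Y) [SFinite μ]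
    (h : ∀ U : Set X, IsOpen U → (lam₁ U = 0 ↔ lam₂ U = 0)) :
    ∀ W : Set (X × Y), IsOpen W → ((lam₁.prod μ) W = 0 ↔ (lam₂.prod μ) W = 0) :=
  fun _ hW => ⟨Measure.prod_eq_zero_of_isOpen μ (fun U hU => (h U hU).mp) hW,
    Measure.prod_eq_zero_of_isOpen μ (fun U hU => (h U hU).mpr) hW⟩

theorem prod_vanish_same_open {X Y : Type*}
    [TopologicalSpace X] [MeasurableSpace X] [OpensMeasurableSpace X]
    [SecondCountableTopology X]
    [TopologicalSpace Y] [MeasurableSpace Y] [OpensMeasurableSpace Y]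
    [SecondCountableTopology Y]
    (lam₁ lam₂ : Measure X) (μ : Measure Y) [SFinite μ]
    (h : ∀ U : Set X, IsOpen U → (lam₁ U = 0 ↔ lam₂ U = 0)) :
    ∀ W : Set (X × Y), IsOpen W → ((lam₁.prod μ) W = 0 ↔ (lam₂.prod μ) W = 0) :=
  prod_vanish_same_open_general lam₁ lam₂ μ h
end

section
/- Let k and t be natural numbers with k even, k ≥ 2, t odd, t ≥ 3, and set p = (t+1)/2, q = (4k+t+1)/2, r = (7k+t−1)/2, p' = (k+t+1)/2, q' = (2k+t+1)/2, r' = (8k+t−1)/2 (all exact integer divisions). Let F be the free group on two generators x and y, and for natural numbers p, q, r let w(p,q,r) = y·x·y^p·x⁻¹·y^q·x⁻¹·y^r ∈ F. Then w(p,q,r) ≠ w(p',q',r') in F, yet for every group G, every g ∈ G, all integers n, m, and the group homomorphism f : F → G determined by f(x) = g^n and f(y) = g^m, one has f(w(p,q,r)) = f(w(p',q',r')). -/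
/-!
Under a homomorphism sending `x` and `y` to powers `g ^ n`, `g ^ m` of one element, the image
of `w(p,q,r)` only sees the exponent sums of `w(p,q,r)`, namely `-1` in `x` and `p + q + r + 1`
in `y`, and the two triples of the family have the same sum `p + q + r`.

The words themselves are told apart by the lamplighter group `ℤ ≀ ℤ`, acting on `ℤ × ℤ` with
`x` shifting the first coordinate and `y` raising the second one on the column `i = 0`: the
image of `w(p,q,r)` raises the points `(2,0)`, `(1,0)`, `(0,0)` by `p`, `q + 1`, `r`, so
`w(p,q,r)` determines `(p,q,r)`.
-/

/-- The word `y·x·y^p·x⁻¹·y^q·x⁻¹·y^r` in the free group on two generators,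
where `x = FreeGroup.of 0` and `y = FreeGroup.of 1`. -/
def pantsWord (p q r : ℕ) : FreeGroup (Fin 2) :=
  FreeGroup.of 1 * FreeGroup.of 0 * (FreeGroup.of 1) ^ p * (FreeGroup.of 0)⁻¹
    * (FreeGroup.of 1) ^ q * (FreeGroup.of 0)⁻¹ * (FreeGroup.of 1) ^ r

open Equiv

def shiftFst : Perm (ℤ × ℤ) := prodCongr (Equiv.addRight 1) (Equiv.refl ℤ)

def bumpAtZero : Perm (ℤ × ℤ) :=
  prodShear (Equiv.refl ℤ) fun i => Equiv.addRight (if i = 0 then 1 else 0)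

lemma shiftFst_apply (i j : ℤ) : shiftFst (i, j) = (i + 1, j) := rfl

lemma shiftFst_inv_apply (i j : ℤ) : shiftFst⁻¹ (i, j) = (i - 1, j) := by
  simp [shiftFst, Perm.inv_def, sub_eq_add_neg]

lemma bumpAtZero_pow_apply (n : ℕ) (i j : ℤ) :
    (bumpAtZero ^ n) (i, j) = (i, j + if i = 0 then (n : ℤ) else 0) := by
  induction n generalizing j with
  | zero => simp
  | succ n ih =>
    rw [pow_succ', Perm.mul_apply, ih]
    simp only [bumpAtZero, prodShear_apply, coe_refl, id, coe_addRight, Prod.mk.injEq, true_and]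
    split_ifs <;> push_cast <;> ring

lemma bumpAtZero_apply (i j : ℤ) : bumpAtZero (i, j) = (i, j + if i = 0 then 1 else 0) := by
  simpa using bumpAtZero_pow_apply 1 i j

noncomputable def lamplighterHom : FreeGroup (Fin 2) →* Perm (ℤ × ℤ) :=
  FreeGroup.lift ![shiftFst, bumpAtZero]

lemma lamplighterHom_pantsWord_apply (p q r : ℕ) (i : ℤ) :
    lamplighterHom (pantsWord p q r) (i, 0) =
      (i - 1, (if i = 2 then (p : ℤ) else 0) + (if i = 1 then (q + 1 : ℤ) else 0)
        + (if i = 0 then (r : ℤ) else 0)) := by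
  simp only [pantsWord, lamplighterHom, map_mul, map_pow, map_inv, FreeGroup.lift_apply_of,
    Matrix.cons_val_zero, Matrix.cons_val_one, Perm.mul_apply, bumpAtZero_pow_apply,
    bumpAtZero_apply, shiftFst_inv_apply, shiftFst_apply, sub_add_cancel, zero_add,
    Prod.mk.injEq, true_and]
  split_ifs <;> omega

theorem pantsWord_inj {p q r p' q' r' : ℕ} :
    pantsWord p q r = pantsWord p' q' r' ↔ p = p' ∧ q = q' ∧ r = r' := by
  refine ⟨fun h => ?_, by rintro ⟨rfl, rfl, rfl⟩; rfl⟩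
  have height (i : ℤ) := congrArg (fun w => (lamplighterHom w (i, 0)).2) h
  simp only [lamplighterHom_pantsWord_apply] at height
  have hp := height 2
  have hq := height 1
  have hr := height 0
  norm_num at hp hq hr
  omega

theorem map_pantsWord_eq_zpow {G : Type*} [Group G] {f : FreeGroup (Fin 2) →* G} {g : G}
    {n m : ℤ} (hx : f (FreeGroup.of 0) = g ^ n) (hy : f (FreeGroup.of 1) = g ^ m) (p q r : ℕ) :
    f (pantsWord p q r) = g ^ (m * ((p + q + r + 1 : ℕ) : ℤ) - n) := by
  simp only [pantsWord, map_mul, map_pow, map_inv, hx, hy]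
  simp only [← zpow_natCast, ← zpow_mul, ← zpow_neg, ← zpow_add]
  congr 1
  push_cast
  ring

theorem pantsWord_family_distinct_but_equal_images_general (k t : ℕ)
    (hk2 : 2 ≤ k) :
    pantsWord ((t + 1) / 2) ((4 * k + t + 1) / 2) ((7 * k + t - 1) / 2)
      ≠ pantsWord ((k + t + 1) / 2) ((2 * k + t + 1) / 2) ((8 * k + t - 1) / 2)
    ∧ ∀ (G : Type*) [Group G], ∀ (g : G) (n m : ℤ)
        (f : FreeGroup (Fin 2) →* G),
        f (FreeGroup.of 0) = g ^ n → f (FreeGroup.of 1) = g ^ m →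
        f (pantsWord ((t + 1) / 2) ((4 * k + t + 1) / 2) ((7 * k + t - 1) / 2))
          = f (pantsWord ((k + t + 1) / 2) ((2 * k + t + 1) / 2)
                ((8 * k + t - 1) / 2)) := by
  refine ⟨fun h => ?_, fun G _ g n m f hx hy => ?_⟩
  · have hq := (pantsWord_inj.1 h).2.1
    omega
  · have hsum : (t + 1) / 2 + (4 * k + t + 1) / 2 + (7 * k + t - 1) / 2
        = (k + t + 1) / 2 + (2 * k + t + 1) / 2 + (8 * k + t - 1) / 2 := by
      rcases Nat.even_or_odd' k with ⟨a, rfl | rfl⟩ <;>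
        rcases Nat.even_or_odd' t with ⟨b, rfl | rfl⟩ <;> omega
    rw [map_pantsWord_eq_zpow hx hy, map_pantsWord_eq_zpow hx hy, hsum]

theorem pantsWord_family_distinct_but_equal_images (k t : ℕ)
    (hk : Even k) (hk2 : 2 ≤ k) (ht : Odd t) (ht3 : 3 ≤ t) :
    pantsWord ((t + 1) / 2) ((4 * k + t + 1) / 2) ((7 * k + t - 1) / 2)
      ≠ pantsWord ((k + t + 1) / 2) ((2 * k + t + 1) / 2) ((8 * k + t - 1) / 2)
    ∧ ∀ (G : Type*) [Group G], ∀ (g : G) (n m : ℤ)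
        (f : FreeGroup (Fin 2) →* G),
        f (FreeGroup.of 0) = g ^ n → f (FreeGroup.of 1) = g ^ m →
        f (pantsWord ((t + 1) / 2) ((4 * k + t + 1) / 2) ((7 * k + t - 1) / 2))
          = f (pantsWord ((k + t + 1) / 2) ((2 * k + t + 1) / 2)
                ((8 * k + t - 1) / 2)) :=
  pantsWord_family_distinct_but_equal_images_general k t hk2
end
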